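/- For every continuous f : [0,1] → ℝ with f(0) = f(1) = 0 and every d ∈ (0,1] with d ∉ S(f), the Lebesgue measure of S(f) ∩ [0,d] is strictly greater than d/2. -/

import Mathlib

def chordSet (f : ℝ → ℝ) : Set ℝ :=
  {ℓ | ℓ ∈ Set.Icc (0:ℝ) 1 ∧ ∃ s ∈ Set.Icc (0:ℝ) 1, s + ℓ ∈ Set.Icc (0:ℝ) 1 ∧ f s = f (s + ℓ)}

/-!
Replacing `f` by `-f`, assume `f d > 0`. The non-chord lengths `x` with `f x > 0` are closed under
addition (a non-chord `x` makes `s ↦ f (s + x) - f s` of constant sign, the sign of `f x`), and a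
non-chord with `f x > 0` and one with `f y < 0` satisfy `x + y > 1` (look at a minimum point of
`f`). Hence no sum of such positive non-chords and multiples of `d` equals `1`. Writing
`1 = e + (n + 1) d` with `0 < e < d`, the reflections `x ↦ e - x` of `(0, e)` and `x ↦ e + d - x`
of `(e, d)` send non-chords to chords, so `S(f)` fills at least half of each interval.
The gain in `(0, e)` is strict: non-chords near `d` let the reflection of a non-chord be pushed
slightly to the right, and non-chords stay away from `0` since `S(f)` contains `[0, δ]` around a
maximum point of `f`.
-/

open Set MeasureTheory

lemma chordSet_congr {f g : ℝ → ℝ} (h : EqOn f g (Icc 0 1)) : chordSet f = chordSet g := by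
  ext ℓ
  constructor <;> rintro ⟨hℓ, s, hs, hsℓ, heq⟩
  · exact ⟨hℓ, s, hs, hsℓ, by rw [← h hs, ← h hsℓ, heq]⟩
  · exact ⟨hℓ, s, hs, hsℓ, by rw [h hs, h hsℓ, heq]⟩

@[simp]
lemma chordSet_neg (f : ℝ → ℝ) : chordSet (-f) = chordSet f := by
  ext ℓ
  simp only [chordSet, Pi.neg_apply, neg_inj]

lemma mem_chordSet_of_apply_eq_zero {f : ℝ → ℝ} (h0 : f 0 = 0) {x : ℝ} (hx : x ∈ Icc 0 1)
    (hfx : f x = 0) : x ∈ chordSet f :=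
  ⟨hx, 0, left_mem_Icc.2 zero_le_one, by rwa [zero_add], by rw [zero_add, h0, hfx]⟩

lemma isClosed_chordSet {f : ℝ → ℝ} (hf : Continuous f) : IsClosed (chordSet f) := by
  let K : Set (ℝ × ℝ) := Icc 0 1 ×ˢ Icc 0 1 ∩
    {p | p.2 + p.1 ∈ Icc (0:ℝ) 1 ∧ f p.2 = f (p.2 + p.1)}
  have hK : IsCompact K := by
    exact (isCompact_Icc.prod isCompact_Icc).inter_right
      ((isClosed_Icc.preimage (by fun_prop)).inter (isClosed_eq (by fun_prop) (by fun_prop)))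
  have : chordSet f = Prod.fst '' K := by
    ext ℓ
    constructor
    · rintro ⟨hℓ, s, hs, hsℓ, heq⟩
      exact ⟨(ℓ, s), ⟨⟨hℓ, hs⟩, hsℓ, heq⟩, rfl⟩
    · rintro ⟨⟨ℓ, s⟩, ⟨⟨hℓ, hs⟩, hsℓ, heq⟩, rfl⟩
      exact ⟨hℓ, s, hs, hsℓ, heq⟩
  rw [this]
  exact (hK.image continuous_fst).isClosed

lemma Icc_subset_chordSet_of_isMaxOn {f : ℝ → ℝ} (hf : Continuous f) {p : ℝ}
    (hmax : IsMaxOn f (Icc 0 1) p) : Icc 0 (min p (1 - p)) ⊆ chordSet f := by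
  rintro ℓ ⟨hℓ0, hℓ⟩
  have hℓp : ℓ ≤ p := hℓ.trans (min_le_left _ _)
  have hℓp' : ℓ ≤ 1 - p := hℓ.trans (min_le_right _ _)
  have hleft : f (p - ℓ) ≤ f p := hmax ⟨by linarith, by linarith⟩
  have hright : f (p + ℓ) ≤ f p := hmax ⟨by linarith, by linarith⟩
  obtain ⟨s, hs, hgs⟩ := intermediate_value_Icc' (sub_le_self p hℓ0)
    (f := fun s => f (s + ℓ) - f s) (by fun_prop)
    (show (0:ℝ) ∈ Icc _ _ from ⟨by linarith, by simp only [sub_add_cancel]; linarith⟩)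
  exact ⟨⟨hℓ0, by linarith⟩, s, ⟨by linarith [hs.1], by linarith [hs.2]⟩,
    ⟨by linarith [hs.1], by linarith [hs.2]⟩, (sub_eq_zero.1 hgs).symm⟩

lemma exists_pos_Icc_subset_chordSet {f : ℝ → ℝ} (hf : Continuous f) (h0 : f 0 = 0)
    (h1 : f 1 = 0) {x : ℝ} (hx : x ∈ Icc (0:ℝ) 1) (hfx : 0 < f x) :
    ∃ δ > 0, Icc 0 δ ⊆ chordSet f := by
  obtain ⟨p, hp, hmax⟩ :=
    isCompact_Icc.exists_isMaxOn (nonempty_Icc.2 zero_le_one) hf.continuousOn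
  have hfp : 0 < f p := hfx.trans_le (hmax hx)
  have hp0 : 0 < p := hp.1.lt_of_ne (by rintro rfl; linarith)
  have hp1 : p < 1 := hp.2.lt_of_ne (by rintro rfl; linarith)
  exact ⟨min p (1 - p), lt_min hp0 (sub_pos.2 hp1), Icc_subset_chordSet_of_isMaxOn hf hmax⟩

/-- Non-chord lengths `x` with `f x < 0` are expressed as `IsPosNonChord (-f) x`. -/
def IsPosNonChord (f : ℝ → ℝ) (x : ℝ) : Prop :=
  x ∈ Ioc (0:ℝ) 1 ∧ x ∉ chordSet f ∧ 0 < f x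

lemma isPosNonChord_or_neg {F : ℝ → ℝ} (h0 : F 0 = 0) {x : ℝ} (hx : x ∈ Ioc (0:ℝ) 1)
    (hxS : x ∉ chordSet F) :
    IsPosNonChord F x ∨ IsPosNonChord (-F) x := by
  have hFx : F x ≠ 0 := fun h => hxS (mem_chordSet_of_apply_eq_zero h0 (Ioc_subset_Icc_self hx) h)
  rcases hFx.lt_or_gt with hneg | hpos
  · exact Or.inr ⟨hx, by rwa [chordSet_neg], by simpa using hneg⟩
  · exact Or.inl ⟨hx, hxS, hpos⟩

lemma IsPosNonChord.exists_Ioo_subset {F : ℝ → ℝ} (hF : Continuous F) {d : ℝ}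
    (hd : IsPosNonChord F d) : ∃ ε > 0, Ioo (d - ε) d ⊆ {z | IsPosNonChord F z} := by
  have hU : IsOpen ((chordSet F)ᶜ ∩ {z | 0 < F z} ∩ Ioi 0) :=
    ((isClosed_chordSet hF).isOpen_compl.inter (isOpen_lt continuous_const hF)).inter isOpen_Ioi
  obtain ⟨ε, hε, hball⟩ := Metric.isOpen_iff.1 hU d ⟨⟨hd.2.1, hd.2.2⟩, hd.1.1⟩
  refine ⟨ε, hε, fun z hz => ?_⟩
  obtain ⟨⟨hzS, hFz⟩, hz0⟩ := hball (show z ∈ Metric.ball d ε by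
    rw [Metric.mem_ball, Real.dist_eq, abs_lt]; constructor <;> linarith [hz.1, hz.2])
  exact ⟨⟨hz0, hz.2.le.trans hd.1.2⟩, hzS, hFz⟩

section NonChord

variable {F : ℝ → ℝ} (hF : Continuous F) (h0 : F 0 = 0) {x y d : ℝ}
include hF h0

lemma IsPosNonChord.apply_lt_apply_add (hx : IsPosNonChord F x) {s : ℝ} (hs : 0 ≤ s)
    (hsx : s + x ≤ 1) : F s < F (s + x) := by
  by_contra! hle
  obtain ⟨t, ht, hgt⟩ := intermediate_value_Icc' hs (f := fun t => F (t + x) - F t) (by fun_prop)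
    (show (0:ℝ) ∈ Icc _ _ from
      ⟨by linarith, by simp only [zero_add, h0, sub_zero]; exact hx.2.2.le⟩)
  exact hx.2.1 ⟨⟨hx.1.1.le, hx.1.2⟩, t, ⟨ht.1, by linarith [ht.2, hx.1.1]⟩,
    ⟨by linarith [ht.1, hx.1.1], by linarith [ht.2]⟩, (sub_eq_zero.1 hgt).symm⟩

lemma IsPosNonChord.add (hx : IsPosNonChord F x) (hy : IsPosNonChord F y) (hxy : x + y ≤ 1) :
    IsPosNonChord F (x + y) := by
  refine ⟨⟨by linarith [hx.1.1, hy.1.1], hxy⟩, ?_, ?_⟩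
  · rintro ⟨-, s, hs, hsxy, heq⟩
    have h₁ := hx.apply_lt_apply_add hF h0 hs.1 (by linarith [hsxy.2, hy.1.1])
    have h₂ := hy.apply_lt_apply_add hF h0 (s := s + x) (by linarith [hs.1, hx.1.1])
      (by linarith [hsxy.2])
    rw [add_assoc] at h₂
    linarith
  · have h₁ := hx.apply_lt_apply_add hF h0 le_rfl (by linarith [hy.1.1])
    have h₂ := hy.apply_lt_apply_add hF h0 hx.1.1.le hxy
    rw [zero_add, h0] at h₁
    linarith

/-- A positive and a negative non-chord length straddle a minimum point of `F`. -/
lemma IsPosNonChord.one_lt_add_of_neg (hx : IsPosNonChord F x) (hy : IsPosNonChord (-F) y) :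
    1 < x + y := by
  obtain ⟨p, hp, hmin⟩ :=
    isCompact_Icc.exists_isMinOn (nonempty_Icc.2 zero_le_one) hF.continuousOn
  have hpx : p < x := by
    by_contra! hxp
    have := hx.apply_lt_apply_add hF h0 (s := p - x) (by linarith) (by linarith [hp.2])
    rw [sub_add_cancel] at this
    have hm : F p ≤ F (p - x) := hmin ⟨by linarith, by linarith [hp.2, hx.1.1]⟩
    linarith
  by_contra! hle
  have := hy.apply_lt_apply_add hF.neg (by simp [h0]) hp.1 (by linarith)
  simp only [Pi.neg_apply, neg_lt_neg_iff] at this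
  have hm : F p ≤ F (p + y) := hmin ⟨by linarith [hp.1, hy.1.1], by linarith⟩
  linarith

variable (h1 : F 1 = 0)
include h1

lemma IsPosNonChord.add_nat_mul_ne_one (hx : IsPosNonChord F x) (hd : IsPosNonChord F d)
    (k : ℕ) : x + k * d ≠ 1 := by
  induction k generalizing x with
  | zero =>
    intro h
    have := hx.2.2
    rw [Nat.cast_zero, zero_mul, add_zero] at h
    rw [h, h1] at this
    exact this.false
  | succ k ih =>
    intro h
    have hkd : 0 ≤ (k : ℝ) * d := by positivity [hd.1.1.le]
    refine ih (hx.add hF h0 hd (by push_cast at h; linarith)) ?_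
    push_cast at h
    linarith

lemma IsPosNonChord.add_add_nat_mul_ne_one (hx : IsPosNonChord F x) (hy : IsPosNonChord F y)
    (hd : IsPosNonChord F d) (k : ℕ) : x + y + k * d ≠ 1 := by
  intro h
  have hkd : 0 ≤ (k : ℝ) * d := mul_nonneg k.cast_nonneg hd.1.1.le
  exact (hx.add hF h0 hy (by linarith)).add_nat_mul_ne_one hF h0 h1 hd k h

lemma IsPosNonChord.exists_nat_mul_lt_one_lt (hd : IsPosNonChord F d) :
    ∃ n : ℕ, (n + 1) * d < 1 ∧ 1 < (n + 2) * d := by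
  have hd0 := hd.1.1
  obtain ⟨n, hn⟩ : ∃ n, ⌊1 / d⌋₊ = n + 1 :=
    Nat.exists_eq_add_one.2 (Nat.floor_pos.2 ((one_le_div hd0).2 hd.1.2))
  have hle := Nat.floor_le (one_div_pos.2 hd0).le
  have hlt := Nat.lt_floor_add_one (1 / d)
  rw [hn, Nat.cast_add_one, le_div_iff₀ hd0] at hle
  rw [hn, Nat.cast_add_one, add_assoc, one_add_one_eq_two, div_lt_iff₀ hd0] at hlt
  refine ⟨n, hle.lt_of_ne fun h => hd.add_nat_mul_ne_one hF h0 h1 hd n ?_, hlt⟩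
  linarith

end NonChord

lemma ofReal_sub_add_volume_le_two_mul_volume {S G : Set ℝ} (hS : MeasurableSet S) {α β : ℝ}
    (hrefl : ∀ x ∈ Ioo α β \ S, α + β - x ∈ S) (hG : G ⊆ S ∩ Ioo α β)
    (hGrefl : ∀ x ∈ Ioo α β \ S, α + β - x ∉ G) :
    ENNReal.ofReal (β - α) + volume G ≤ 2 * volume (S ∩ Ioo α β) := by
  set R := (α + β - ·) ⁻¹' (Ioo α β \ S)
  have hRm : MeasurableSet R := (measurableSet_Ioo.diff hS).preimage (measurable_const_sub _)
  have hR : volume R = volume (Ioo α β \ S) :=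
    (Measure.measurePreserving_sub_left volume _).measure_preimage
      (measurableSet_Ioo.diff hS).nullMeasurableSet
  have hRG : R ∪ G ⊆ S ∩ Ioo α β := by
    refine union_subset (fun x (hx : α + β - x ∈ Ioo α β \ S) => ?_) hG
    have hx' := hrefl _ hx
    rw [sub_sub_cancel] at hx'
    obtain ⟨⟨h₁, h₂⟩, -⟩ := hx
    exact ⟨hx', by linarith, by linarith⟩
  have hdisj : Disjoint R G := disjoint_left.2 fun x hx hxG => hGrefl _ hx (by rwa [sub_sub_cancel])
  calc ENNReal.ofReal (β - α) + volume G
      = volume (S ∩ Ioo α β) + (volume R + volume G) := by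
        rw [hR, ← add_assoc, inter_comm, measure_inter_add_sdiff _ hS, Real.volume_Ioo]
    _ = volume (S ∩ Ioo α β) + volume (R ∪ G) := by rw [measure_union' hdisj hRm]
    _ ≤ volume (S ∩ Ioo α β) + volume (S ∩ Ioo α β) := by gcongr
    _ = 2 * volume (S ∩ Ioo α β) := (two_mul _).symm

lemma ofReal_sub_le_two_mul_volume {S : Set ℝ} (hS : MeasurableSet S) {α β : ℝ}
    (hrefl : ∀ x ∈ Ioo α β \ S, α + β - x ∈ S) :
    ENNReal.ofReal (β - α) ≤ 2 * volume (S ∩ Ioo α β) := by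
  simpa using ofReal_sub_add_volume_le_two_mul_volume hS hrefl (empty_subset _)
    (fun _ _ => notMem_empty _)

lemma ofReal_sub_lt_two_mul_volume {S : Set ℝ} (hS : MeasurableSet S) {α β p q : ℝ}
    (hrefl : ∀ x ∈ Ioo α β \ S, α + β - x ∈ S) (hpq : p < q) (hG : Ioo p q ⊆ S ∩ Ioo α β)
    (hGrefl : ∀ x ∈ Ioo α β \ S, α + β - x ∉ Ioo p q) :
    ENNReal.ofReal (β - α) < 2 * volume (S ∩ Ioo α β) := by
  refine lt_of_lt_of_le ?_ (ofReal_sub_add_volume_le_two_mul_volume hS hrefl hG hGrefl)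
  rw [Real.volume_Ioo]
  exact ENNReal.lt_add_right ENNReal.ofReal_ne_top (by simpa using hpq)

lemma volume_inter_Ioo_add_volume_inter_Ioo_le {S : Set ℝ} (hS : MeasurableSet S) {a b c : ℝ}
    (hab : a ≤ b) (hbc : b ≤ c) :
    volume (S ∩ Ioo a b) + volume (S ∩ Ioo b c) ≤ volume (S ∩ Icc a c) := by
  rw [← measure_union (disjoint_left.2 fun x hx hx' => by linarith [hx.2.2, hx'.2.1])
    (hS.inter measurableSet_Ioo)]
  refine measure_mono (union_subset ?_ ?_) <;> rintro x ⟨hxS, hx₁, hx₂⟩ <;>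
    exact ⟨hxS, by linarith, by linarith⟩

section Gap

variable {F : ℝ → ℝ} (hF : Continuous F) (h0 : F 0 = 0) (h1 : F 1 = 0) {d e : ℝ} {n : ℕ}
  (hd : IsPosNonChord F d) (he : e + (n + 1) * d = 1)
include hF h0 hd he

lemma isPosNonChord_of_mem_Ioo {x : ℝ} (hx : x ∈ Ioo 0 e) (hxS : x ∉ chordSet F) :
    IsPosNonChord F x := by
  have hnd : 0 ≤ (n : ℝ) * d := mul_nonneg n.cast_nonneg hd.1.1.le
  refine (isPosNonChord_or_neg h0 ⟨hx.1, by linarith [hx.2, hd.1.1]⟩ hxS).resolve_right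
    fun hneg => ?_
  linarith [hd.one_lt_add_of_neg hF h0 hneg, hx.2]

include h1

lemma sub_mem_chordSet_of_mem_Ioo_zero : ∀ x ∈ Ioo 0 e \ chordSet F, 0 + e - x ∈ chordSet F := by
  rintro x ⟨hx, hxS⟩
  rw [zero_add]
  by_contra hyS
  have hxP := isPosNonChord_of_mem_Ioo hF h0 hd he hx hxS
  have hyP := isPosNonChord_of_mem_Ioo hF h0 hd he ⟨sub_pos.2 hx.2, by linarith [hx.1]⟩ hyS
  exact hxP.add_add_nat_mul_ne_one hF h0 h1 hyP hd (n + 1) (by push_cast; linarith)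

lemma sub_mem_chordSet_of_mem_Ioo (he0 : 0 ≤ e) (hed : e < d) :
    ∀ x ∈ Ioo e d \ chordSet F, e + d - x ∈ chordSet F := by
  rintro x ⟨⟨hex, hxd⟩, hxS⟩
  by_contra hyS
  have hnd : 0 ≤ (n : ℝ) * d := mul_nonneg n.cast_nonneg hd.1.1.le
  have hsum : x + (e + d - x) + n * d = 1 := by linarith
  rcases isPosNonChord_or_neg h0 ⟨by linarith, by linarith⟩ hxS with hxP | hxN <;>
    rcases isPosNonChord_or_neg h0 ⟨by linarith, by linarith⟩ hyS with hyP | hyN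
  · exact hxP.add_add_nat_mul_ne_one hF h0 h1 hyP hd n hsum
  · linarith [hxP.one_lt_add_of_neg hF h0 hyN]
  · linarith [hyP.one_lt_add_of_neg hF h0 hxN]
  · -- `e + d = 1 - n d` is then a negative non-chord, hence `1 < e + 2d`, forcing `n = 0`
    have hN := hxN.add hF.neg (by simp [h0]) hyN (by linarith)
    have hlt := hd.one_lt_add_of_neg hF h0 hN
    have hn : n = 0 := by
      by_contra hn
      have : (1 : ℝ) ≤ n := Nat.one_le_cast.2 (Nat.one_le_iff_ne_zero.2 hn)
      nlinarith [hd.1.1]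
    have hF1 := hN.2.2
    rw [hn, Nat.cast_zero, zero_mul, add_zero] at hsum
    rw [hsum] at hF1
    simp [h1] at hF1

variable {ε : ℝ} (hε : Ioo (d - ε) d ⊆ {z | IsPosNonChord F z})
include hε

/-- Non-chords near `d` push the reflection `e - x` of a non-chord `x` slightly to the right. -/
lemma mem_chordSet_of_mem_Ioo_sub {x t : ℝ} (hx : x ∈ Ioo 0 e \ chordSet F)
    (ht : t ∈ Ioo (e - x) e) (htε : t < e - x + ε) : t ∈ chordSet F := by
  by_contra htS
  have hnd : 0 ≤ (n : ℝ) * d := mul_nonneg n.cast_nonneg hd.1.1.le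
  have htP := isPosNonChord_of_mem_Ioo hF h0 hd he ⟨by linarith [hx.1.2, ht.1], ht.2⟩ htS
  have hz : IsPosNonChord F (d - (t - (e - x))) := hε ⟨by linarith, by linarith [ht.1]⟩
  have hxz := (isPosNonChord_of_mem_Ioo hF h0 hd he hx.1 hx.2).add hF h0 hz
    (by linarith [ht.1, hx.1.2])
  exact htP.add_add_nat_mul_ne_one hF h0 h1 hxz hd n (by linarith)

lemma exists_Ioo_subset_chordSet_inter_Ioo {δ : ℝ} (hδ0 : 0 < δ) (hδ : Icc 0 δ ⊆ chordSet F)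
    (hε0 : 0 < ε) (he0 : 0 < e) :
    ∃ p q, p < q ∧ Ioo p q ⊆ chordSet F ∩ Ioo 0 e ∧
      ∀ x ∈ Ioo 0 e \ chordSet F, 0 + e - x ∉ Ioo p q := by
  rcases (Ioo 0 e \ chordSet F).eq_empty_or_nonempty with hA | hA
  · rw [sdiff_eq_empty] at hA
    exact ⟨0, e, he0, fun t ht => ⟨hA ht, ht⟩, fun x hx => (hx.2 (hA hx.1)).elim⟩
  have hbdd : BddBelow (Ioo 0 e \ chordSet F) := ⟨0, fun x hx => hx.1.1.le⟩
  set a := sInf (Ioo 0 e \ chordSet F)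
  -- `a > 0` because all short lengths are chords
  have hδa : δ ≤ a := le_csInf hA fun x hx => by
    by_contra! h
    exact hx.2 (hδ ⟨hx.1.1.le, h.le⟩)
  obtain ⟨x, hxA, hxa⟩ := exists_lt_of_csInf_lt hA (show a < a + ε / 2 by linarith)
  have hax : a ≤ x := csInf_le hbdd hxA
  refine ⟨e - a, min e (e - a + ε / 2), lt_min (by linarith) (by linarith), ?_, ?_⟩
  · rintro t ⟨hat, htq⟩
    have hte := htq.trans_le (min_le_left _ _)
    have htε := htq.trans_le (min_le_right _ _)
    exact ⟨mem_chordSet_of_mem_Ioo_sub hF h0 h1 hd he hε hxA ⟨by linarith, hte⟩ (by linarith),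
      by linarith [hxA.1.2], hte⟩
  · rintro y hy ⟨hyp, -⟩
    linarith [csInf_le hbdd hy]

lemma ofReal_lt_two_mul_volume_chordSet_inter_Ioo_zero {δ : ℝ} (hδ0 : 0 < δ)
    (hδ : Icc 0 δ ⊆ chordSet F) (hε0 : 0 < ε) (he0 : 0 < e) :
    ENNReal.ofReal e < 2 * volume (chordSet F ∩ Ioo 0 e) := by
  obtain ⟨p, q, hpq, hG, hGrefl⟩ :=
    exists_Ioo_subset_chordSet_inter_Ioo hF h0 h1 hd he hε hδ0 hδ hε0 he0
  simpa using ofReal_sub_lt_two_mul_volume (isClosed_chordSet hF).measurableSet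
    (sub_mem_chordSet_of_mem_Ioo_zero hF h0 h1 hd he) hpq hG hGrefl

end Gap

lemma ofReal_lt_two_mul_volume_of_isPosNonChord {F : ℝ → ℝ} (hF : Continuous F) (h0 : F 0 = 0)
    (h1 : F 1 = 0) {d : ℝ} (hd : IsPosNonChord F d) :
    ENNReal.ofReal d < 2 * volume (chordSet F ∩ Icc 0 d) := by
  obtain ⟨n, hlt, hgt⟩ := hd.exists_nat_mul_lt_one_lt hF h0 h1
  set e := 1 - (n + 1) * d
  have he : e + (n + 1) * d = 1 := by ring
  have he0 : 0 < e := by linarith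
  have hed : e < d := by linarith
  obtain ⟨δ, hδ0, hδ⟩ := exists_pos_Icc_subset_chordSet hF h0 h1 (Ioc_subset_Icc_self hd.1) hd.2.2
  obtain ⟨ε, hε0, hε⟩ := hd.exists_Ioo_subset hF
  have hS := (isClosed_chordSet hF).measurableSet
  have hleft := ofReal_lt_two_mul_volume_chordSet_inter_Ioo_zero hF h0 h1 hd he hε hδ0 hδ hε0 he0
  have hright :=
    ofReal_sub_le_two_mul_volume hS (sub_mem_chordSet_of_mem_Ioo hF h0 h1 hd he he0.le hed)
  calc ENNReal.ofReal d = ENNReal.ofReal e + ENNReal.ofReal (d - e) := by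
        rw [← ENNReal.ofReal_add he0.le (by linarith), add_sub_cancel]
    _ < 2 * volume (chordSet F ∩ Ioo 0 e) + 2 * volume (chordSet F ∩ Ioo e d) :=
        ENNReal.add_lt_add_of_lt_of_le ENNReal.ofReal_ne_top hleft hright
    _ = 2 * (volume (chordSet F ∩ Ioo 0 e) + volume (chordSet F ∩ Ioo e d)) := (mul_add _ _ _).symm
    _ ≤ 2 * volume (chordSet F ∩ Icc 0 d) := by
        gcongr
        exact volume_inter_Ioo_add_volume_inter_Ioo_le hS he0.le hed.le

theorem stmt10 (f : ℝ → ℝ) (hf : ContinuousOn f (Set.Icc 0 1))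
    (h0 : f 0 = 0) (h1 : f 1 = 0) (d : ℝ) (hd : d ∈ Set.Ioc (0:ℝ) 1)
    (hdS : d ∉ chordSet f) :
    MeasureTheory.volume (chordSet f ∩ Set.Icc 0 d) > ENNReal.ofReal (d / 2) := by
  set F := IccExtend zero_le_one ((Icc 0 1).domRestrict f)
  have hFc : Continuous F := hf.domRestrict.Icc_extend'
  have hFf : EqOn F f (Icc 0 1) := fun x hx => IccExtend_of_mem _ _ hx
  have hF0 : F 0 = 0 := (hFf (left_mem_Icc.2 zero_le_one)).trans h0
  have hF1 : F 1 = 0 := (hFf (right_mem_Icc.2 zero_le_one)).trans h1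
  rw [← chordSet_congr hFf] at hdS ⊢
  suffices ENNReal.ofReal d < 2 * volume (chordSet F ∩ Icc 0 d) by
    rwa [gt_iff_lt, ENNReal.ofReal_div_of_pos two_pos, ENNReal.ofReal_ofNat,
      ENNReal.div_lt_iff (by norm_num) (by norm_num), mul_comm]
  rcases isPosNonChord_or_neg hF0 hd hdS with hpos | hneg
  · exact ofReal_lt_two_mul_volume_of_isPosNonChord hFc hF0 hF1 hpos
  · simpa using
      ofReal_lt_two_mul_volume_of_isPosNonChord hFc.neg (by simp [hF0]) (by simp [hF1]) hneg
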